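/- arXiv:1411.4340 — 3 statements merged into one kernel-verified Lean document; each statement's English description precedes it below -/
import Mathlib

section
/- Let a be a binary sequence of period N, m an integer, and u = a ∥ L^m(ā), where ā is the complement of a. Then R_u(τ) = 2R_a(τ/2) if τ is even, and R_u(τ) = -R_a((τ-1)/2 + m) - R_a((τ+1)/2 - m) if τ is odd. -/
/-- Periodic cross-correlation of binary sequences of period `M`. -/
def corr (M : ℕ) (x y : ZMod M → ZMod 2) (τ : ZMod M) : ℤ :=
  ∑ t ∈ Finset.range M, (-1 : ℤ) ^ ((x (t : ZMod M)).val + (y ((t : ZMod M) + τ)).val)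

/-- Interleaving of two sequences: `(a∥b)(2i)=a(i)`, `(a∥b)(2i+1)=b(i)`. -/
def il (N : ℕ) (a b : ZMod N → ZMod 2) : ZMod (2 * N) → ZMod 2 :=
  fun t => if t.val % 2 = 0 then a ((t.val / 2 : ℕ) : ZMod N)
           else b ((t.val / 2 : ℕ) : ZMod N)

/-!
Split the correlation sum of an interleaving `a ∥ b` against `c ∥ d` into even and odd positions.
At an even lag `2s` even positions meet even ones and odd meet odd, giving `R_{a,c}(s) + R_{b,d}(s)`;
at an odd lag `2s+1` they meet crosswise, giving `R_{a,d}(s) + R_{b,c}(s+1)`. Complementing one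
argument of a correlation negates it, and a shift of either argument moves into the lag. With
`b = d = L^m(ā)` and `c = a` this gives both formulas.
-/

open Finset

lemma Finset.sum_range_two_mul {M : Type*} [AddCommMonoid M] (n : ℕ) (f : ℕ → M) :
    ∑ t ∈ range (2 * n), f t = ∑ i ∈ range n, (f (2 * i) + f (2 * i + 1)) := by
  induction n with
  | zero => simp
  | succ n ih =>
    rw [mul_add_one, sum_range_succ, sum_range_succ, ih, sum_range_succ, add_assoc]

lemma ZMod.sum_range_natCast_add {R : Type*} [AddCommMonoid R] {M : ℕ} (f : ZMod M → R)
    (c : ZMod M) : ∑ t ∈ range M, f (t + c) = ∑ t ∈ range M, f t := by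
  rcases eq_or_ne M 0 with rfl | hM
  · simp
  have : NeZero M := ⟨hM⟩
  have sum_range_eq_sum_univ (g : ZMod M → R) : ∑ t ∈ range M, g t = ∑ t, g t :=
    sum_nbij' Nat.cast val (by simp) (by simp [val_lt])
      (fun t ht => val_cast_of_lt (mem_range.mp ht)) (by simp) (by simp)
  rw [sum_range_eq_sum_univ (fun t => f (t + c)), sum_range_eq_sum_univ]
  exact Equiv.sum_comp (Equiv.addRight c) f

lemma ZMod.val_intCast_two_mul_add {N : ℕ} [NeZero N] (k : ℤ) {r : ℕ} (hr : r < 2) :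
    ((2 * k + r : ℤ) : ZMod (2 * N)).val = 2 * (k : ZMod N).val + r := by
  have hN : (0 : ℤ) < N := by exact_mod_cast Nat.pos_of_ne_zero (NeZero.ne N)
  have hk : 0 ≤ k % N ∧ k % N < N := ⟨Int.emod_nonneg k hN.ne', Int.emod_lt_of_pos k hN⟩
  have hsplit : 2 * k + r = (2 * (k % N) + r) + (2 * N) * (k / N) := by
    linarith [Int.emod_add_mul_ediv k N]
  have hmod : (2 * k + r) % (2 * N : ℕ) = 2 * (k % N) + r := by
    rw [hsplit, Nat.cast_mul, Nat.cast_two, Int.add_mul_emod_self_left,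
      Int.emod_eq_of_lt (by omega) (by omega)]
  have h := ZMod.val_intCast (n := 2 * N) (2 * k + r)
  have h' := ZMod.val_intCast (n := N) k
  omega

lemma ZMod.neg_one_pow_val_one_sub (z : ZMod 2) : (-1 : ℤ) ^ (1 - z).val = -(-1) ^ z.val := by
  fin_cases z <;> rfl

section Correlation

variable {M : ℕ} (x y : ZMod M → ZMod 2) (τ : ZMod M)

lemma corr_one_sub_left : corr M (fun t => 1 - x t) y τ = -corr M x y τ := by
  simp only [corr, pow_add, ZMod.neg_one_pow_val_one_sub, neg_mul, sum_neg_distrib]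

lemma corr_one_sub_right : corr M x (fun t => 1 - y t) τ = -corr M x y τ := by
  simp only [corr, pow_add, ZMod.neg_one_pow_val_one_sub, mul_neg, sum_neg_distrib]

lemma corr_comp_add_right (c : ZMod M) :
    corr M x (fun t => y (t + c)) τ = corr M x y (τ + c) := by
  simp only [corr, add_assoc]

lemma corr_comp_add_left (c : ZMod M) :
    corr M (fun t => x (t + c)) y τ = corr M x y (τ - c) := by
  rw [corr, corr,
    ← ZMod.sum_range_natCast_add (fun t => (-1 : ℤ) ^ ((x t).val + (y (t + (τ - c))).val)) c]
  simp only [add_add_sub_cancel]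

end Correlation

section Interleave

variable {N : ℕ} (a b c d : ZMod N → ZMod 2)

lemma il_intCast_two_mul [NeZero N] (k : ℤ) : il N a b ((2 * k : ℤ) : ZMod (2 * N)) = a k := by
  have h := ZMod.val_intCast_two_mul_add (N := N) k (r := 0) (by norm_num)
  rw [Nat.cast_zero, add_zero, add_zero] at h
  simp only [il, h]
  simp

lemma il_intCast_two_mul_add_one [NeZero N] (k : ℤ) :
    il N a b ((2 * k + 1 : ℤ) : ZMod (2 * N)) = b k := by
  have h := ZMod.val_intCast_two_mul_add (N := N) k (r := 1) (by norm_num)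
  rw [Nat.cast_one] at h
  simp only [il, h]
  simp [Nat.mul_add_div]

lemma corr_il_intCast_two_mul (s : ℤ) :
    corr (2 * N) (il N a b) (il N c d) ((2 * s : ℤ) : ZMod (2 * N)) =
      corr N a c s + corr N b d s := by
  rcases eq_or_ne N 0 with rfl | hN
  · simp [corr]
  have : NeZero N := ⟨hN⟩
  rw [corr, sum_range_two_mul, sum_add_distrib, corr, corr]
  congr 1 <;> refine sum_congr rfl fun i _ => ?_
  · rw [show ((2 * i : ℕ) : ZMod (2 * N)) = ((2 * (i : ℤ) : ℤ) : ZMod (2 * N)) by push_cast; rfl,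
      ← Int.cast_add, ← mul_add, il_intCast_two_mul, il_intCast_two_mul]
    push_cast; rfl
  · rw [show ((2 * i + 1 : ℕ) : ZMod (2 * N)) = ((2 * (i : ℤ) + 1 : ℤ) : ZMod (2 * N)) by
        push_cast; rfl,
      ← Int.cast_add, show 2 * (i : ℤ) + 1 + 2 * s = 2 * (i + s) + 1 by ring,
      il_intCast_two_mul_add_one, il_intCast_two_mul_add_one]
    push_cast; rfl

lemma corr_il_intCast_two_mul_add_one (s : ℤ) :
    corr (2 * N) (il N a b) (il N c d) ((2 * s + 1 : ℤ) : ZMod (2 * N)) =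
      corr N a d s + corr N b c (s + 1 : ℤ) := by
  rcases eq_or_ne N 0 with rfl | hN
  · simp [corr]
  have : NeZero N := ⟨hN⟩
  rw [corr, sum_range_two_mul, sum_add_distrib, corr, corr]
  congr 1 <;> refine sum_congr rfl fun i _ => ?_
  · rw [show ((2 * i : ℕ) : ZMod (2 * N)) = ((2 * (i : ℤ) : ℤ) : ZMod (2 * N)) by push_cast; rfl,
      ← Int.cast_add, show 2 * (i : ℤ) + (2 * s + 1) = 2 * (i + s) + 1 by ring,
      il_intCast_two_mul, il_intCast_two_mul_add_one]
    push_cast; rfl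
  · rw [show ((2 * i + 1 : ℕ) : ZMod (2 * N)) = ((2 * (i : ℤ) + 1 : ℤ) : ZMod (2 * N)) by
        push_cast; rfl,
      ← Int.cast_add, show 2 * (i : ℤ) + 1 + (2 * s + 1) = 2 * (i + (s + 1)) by ring,
      il_intCast_two_mul_add_one, il_intCast_two_mul]
    push_cast; rfl

end Interleave

theorem stmt_10 (N : ℕ) (a : ZMod N → ZMod 2) (m : ℤ) (τ : ℤ)
    (u : ZMod (2 * N) → ZMod 2)
    (hu : u = il N a (fun t => 1 - a (t + (m : ZMod N)))) :
    (Even τ →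
      corr (2 * N) u u (τ : ZMod (2 * N)) = 2 * corr N a a ((τ / 2 : ℤ) : ZMod N)) ∧
    (Odd τ →
      corr (2 * N) u u (τ : ZMod (2 * N)) =
        -corr N a a (((τ - 1) / 2 + m : ℤ) : ZMod N) - corr N a a (((τ + 1) / 2 - m : ℤ) : ZMod N)) := by
  subst hu
  constructor
  · rintro ⟨s, rfl⟩
    rw [← two_mul, Int.mul_ediv_cancel_left _ two_ne_zero, corr_il_intCast_two_mul,
      corr_one_sub_left (fun t => a (t + (m : ZMod N))), corr_one_sub_right, neg_neg,
      corr_comp_add_left, corr_comp_add_right, sub_add_cancel, two_mul]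
  · rintro ⟨s, rfl⟩
    rw [corr_il_intCast_two_mul_add_one, corr_one_sub_right, corr_comp_add_right,
      corr_one_sub_left (fun t => a (t + (m : ZMod N))), corr_comp_add_left,
      show (2 * s + 1 - 1) / 2 = s by omega, show (2 * s + 1 + 1) / 2 = s + 1 by omega]
    push_cast
    ring
end

section
/- Let N be odd, a a binary sequence of period N, m = (N+1)/2, and u = a ∥ L^m(ā). Then R_u(τ) = 2R_a(τ/2) if τ is even, and R_u(τ) = -2R_a((τ+N)/2) if τ is odd. -/
private def chi (x : ZMod 2) : ℤ := (-1) ^ x.val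

private lemma chi_one_sub (x : ZMod 2) : chi (1 - x) = - chi x := by
  revert x; decide

private lemma sum_range_eq (N : ℕ) [NeZero N] (F : ZMod N → ℤ) :
    ∑ i ∈ Finset.range N, F ((i : ℕ) : ZMod N) = ∑ t : ZMod N, F t := by
  refine Finset.sum_nbij' (fun i => ((i : ℕ) : ZMod N)) (fun t => t.val) ?_ ?_ ?_ ?_ ?_
  · intro i _; exact Finset.mem_univ _
  · intro t _; exact Finset.mem_range.2 (ZMod.val_lt t)
  · intro i hi; exact ZMod.val_cast_of_lt (Finset.mem_range.1 hi)
  · intro t _; exact ZMod.natCast_rightInverse t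
  · intro i _; rfl

private lemma corr_eq (M : ℕ) [NeZero M] (x y : ZMod M → ZMod 2) (τ : ZMod M) :
    corr M x y τ = ∑ t : ZMod M, chi (x t) * chi (y (t + τ)) := by
  rw [corr, ← sum_range_eq M (fun t => chi (x t) * chi (y (t + τ)))]
  exact Finset.sum_congr rfl fun i _ => pow_add _ _ _

private lemma corr_shift (M : ℕ) [NeZero M] (x : ZMod M → ZMod 2) (τ c : ZMod M) :
    ∑ t : ZMod M, chi (x (t + c)) * chi (x ((t + c) + τ)) = corr M x x τ := by
  rw [corr_eq]
  exact Fintype.sum_equiv (Equiv.addRight c) _ _ (fun t => rfl)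

private lemma il_even (N : ℕ) [NeZero N] (a b : ZMod N → ZMod 2) (k : ℤ) :
    il N a b ((2 * k : ℤ) : ZMod (2 * N)) = a ((k : ℤ) : ZMod N) := by
  have hN : 0 < N := Nat.pos_of_ne_zero (NeZero.ne N)
  have h2N : NeZero (2 * N) := ⟨by omega⟩
  have hval : (((2 * k : ℤ) : ZMod (2 * N)).val : ℤ) = 2 * (k % N) := by
    rw [ZMod.val_intCast]; push_cast
    exact Int.mul_emod_mul_of_pos _ _ (by norm_num)
  have hnn : 0 ≤ k % N := Int.emod_nonneg k (by exact_mod_cast hN.ne')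
  have hvalnat : ((2 * k : ℤ) : ZMod (2 * N)).val = 2 * (k % N).toNat := by omega
  rw [il, hvalnat]
  simp only [Nat.mul_mod_right, if_pos rfl, Nat.mul_div_cancel_left _ (by norm_num : 0 < 2)]
  congr 1
  have ht : ((k % N).toNat : ℤ) = k % N := Int.toNat_of_nonneg hnn
  rw [← ZMod.intCast_mod k N, ← ht]
  push_cast
  rfl

private lemma il_odd (N : ℕ) [NeZero N] (a b : ZMod N → ZMod 2) (k : ℤ) :
    il N a b ((2 * k + 1 : ℤ) : ZMod (2 * N)) = b ((k : ℤ) : ZMod N) := by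
  have hN : 0 < N := Nat.pos_of_ne_zero (NeZero.ne N)
  have h2N : NeZero (2 * N) := ⟨by omega⟩
  have hnn : 0 ≤ k % N := Int.emod_nonneg k (by exact_mod_cast hN.ne')
  have hlt : k % N < N := Int.emod_lt_of_pos k (by exact_mod_cast hN)
  have hmod : (2 * k + 1) % (2 * (N : ℤ)) = 2 * (k % N) + 1 := by
    have h1 : 2 * k + 1 = (2 * (k % N) + 1) + (2 * (N : ℤ)) * (k / N) := by
      have := Int.emod_add_mul_ediv k N; ring_nf; linarith [this]
    rw [h1, Int.add_mul_emod_self_left, Int.emod_eq_of_lt (by omega) (by omega)]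
  have hval : (((2 * k + 1 : ℤ) : ZMod (2 * N)).val : ℤ) = 2 * (k % N) + 1 := by
    rw [ZMod.val_intCast]; push_cast; exact hmod
  have hvalnat : ((2 * k + 1 : ℤ) : ZMod (2 * N)).val = 2 * (k % N).toNat + 1 := by omega
  rw [il, hvalnat]
  simp only [Nat.mul_add_mod, Nat.reduceMod, if_neg (by omega : ¬ (2 * (k % N).toNat + 1) % 2 = 0)]
  have hdiv : (2 * (k % N).toNat + 1) / 2 = (k % N).toNat := by omega
  rw [hdiv]
  congr 1
  have ht : ((k % N).toNat : ℤ) = k % N := Int.toNat_of_nonneg hnn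
  rw [← ZMod.intCast_mod k N, ← ht]
  push_cast
  rfl

private lemma sum_range_double (g : ℕ → ℤ) (N : ℕ) :
    ∑ t ∈ Finset.range (2 * N), g t = ∑ i ∈ Finset.range N, (g (2 * i) + g (2 * i + 1)) := by
  induction N with
  | zero => simp
  | succ n ih =>
    rw [Nat.mul_succ, Finset.sum_range_succ, Finset.sum_range_succ, Finset.sum_range_succ, ih]
    ring

private lemma corr_int (M : ℕ) (x : ZMod M → ZMod 2) (c : ℤ) :
    corr M x x ((c : ℤ) : ZMod M) =
      ∑ t ∈ Finset.range M,
        chi (x (((t : ℕ) : ℤ) : ZMod M)) * chi (x ((((t : ℕ) : ℤ) + c) : ZMod M)) := by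
  rw [corr]
  refine Finset.sum_congr rfl fun t _ => ?_
  rw [pow_add]
  push_cast
  rfl

private lemma corr_split (N : ℕ) (x : ZMod (2 * N) → ZMod 2) (c : ℤ) :
    corr (2 * N) x x ((c : ℤ) : ZMod (2 * N)) =
      ∑ i ∈ Finset.range N,
        (chi (x ((2 * (i : ℤ) : ℤ) : ZMod (2 * N)))
            * chi (x ((2 * (i : ℤ) + c : ℤ) : ZMod (2 * N)))
         + chi (x ((2 * (i : ℤ) + 1 : ℤ) : ZMod (2 * N)))
            * chi (x ((2 * (i : ℤ) + 1 + c : ℤ) : ZMod (2 * N)))) := by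
  rw [corr_int, sum_range_double
    (fun t : ℕ => chi (x (((t : ℕ) : ℤ) : ZMod (2 * N)))
      * chi (x ((((t : ℕ) : ℤ) + c) : ZMod (2 * N)))) N]
  refine Finset.sum_congr rfl fun i _ => ?_
  have e1 : ((2 * i : ℕ) : ℤ) = 2 * (i : ℤ) := by push_cast; ring
  have e2 : ((2 * i + 1 : ℕ) : ℤ) = 2 * (i : ℤ) + 1 := by push_cast; ring
  simp only [e1, e2, Int.cast_add]

theorem stmt_11 (N : ℕ) (hN : Odd N) (a : ZMod N → ZMod 2) (τ : ℤ)
    (u : ZMod (2 * N) → ZMod 2)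
    (hu : u = il N a (fun t => 1 - a (t + (((N + 1) / 2 : ℕ) : ZMod N)))) :
    (Even τ →
      corr (2 * N) u u (τ : ZMod (2 * N)) = 2 * corr N a a ((τ / 2 : ℤ) : ZMod N)) ∧
    (Odd τ →
      corr (2 * N) u u (τ : ZMod (2 * N)) = -2 * corr N a a (((τ + N) / 2 : ℤ) : ZMod N)) := by
  obtain ⟨cN, hcN⟩ := hN
  have hNpos : 0 < N := by omega
  haveI : NeZero N := ⟨hNpos.ne'⟩
  haveI : NeZero (2 * N) := ⟨by omega⟩
  set m : ZMod N := (((N + 1) / 2 : ℕ) : ZMod N) with hm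
  set b : ZMod N → ZMod 2 := fun t => 1 - a (t + m) with hb
  have hmval : m = ((cN + 1 : ℕ) : ZMod N) := by rw [hm]; congr 1; omega
  have hm2 : m + m = 1 := by
    rw [hmval, ← Nat.cast_add]
    have h : (cN + 1) + (cN + 1) = N + 1 := by omega
    rw [h]
    push_cast
    simp [ZMod.natCast_self]
  have hbv : ∀ t : ZMod N, b t = 1 - a (t + m) := fun t => rfl
  have even_key : ∀ σ : ℤ,
      corr (2 * N) u u ((2 * σ : ℤ) : ZMod (2 * N)) = 2 * corr N a a ((σ : ℤ) : ZMod N) := by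
    intro σ
    set s : ZMod N := ((σ : ℤ) : ZMod N) with hs
    rw [corr_split N u (2 * σ)]
    have step : ∀ i ∈ Finset.range N,
        (chi (u ((2 * (i : ℤ) : ℤ) : ZMod (2 * N)))
            * chi (u ((2 * (i : ℤ) + 2 * σ : ℤ) : ZMod (2 * N)))
         + chi (u ((2 * (i : ℤ) + 1 : ℤ) : ZMod (2 * N)))
            * chi (u ((2 * (i : ℤ) + 1 + 2 * σ : ℤ) : ZMod (2 * N)))) =
        (chi (a ((i : ℕ) : ZMod N)) * chi (a (((i : ℕ) : ZMod N) + s))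
         + chi (a (((i : ℕ) : ZMod N) + m)) * chi (a ((((i : ℕ) : ZMod N) + m) + s))) := by
      intro i _
      have e1 : (2 * (i : ℤ) + 2 * σ : ℤ) = 2 * ((i : ℤ) + σ) := by ring
      have e2 : (2 * (i : ℤ) + 1 + 2 * σ : ℤ) = 2 * ((i : ℤ) + σ) + 1 := by ring
      rw [e1, e2, hu, il_even, il_even, il_odd, il_odd, hbv, hbv, chi_one_sub, chi_one_sub,
        neg_mul_neg]
      have c1 : (((i : ℤ) + σ : ℤ) : ZMod N) = ((i : ℕ) : ZMod N) + s := by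
        rw [hs]; push_cast; ring
      have c2 : (((i : ℤ)) : ZMod N) = ((i : ℕ) : ZMod N) := by push_cast; ring
      rw [c1, c2]
      ring_nf
    rw [Finset.sum_congr rfl step, Finset.sum_add_distrib,
      sum_range_eq N (fun t => chi (a t) * chi (a (t + s))),
      sum_range_eq N (fun t => chi (a (t + m)) * chi (a ((t + m) + s))),
      corr_shift N a s m, corr_eq]
    ring
  have odd_key : ∀ σ : ℤ,
      corr (2 * N) u u ((2 * σ + 1 : ℤ) : ZMod (2 * N))
        = -2 * corr N a a (((σ : ℤ) : ZMod N) + m) := by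
    intro σ
    set s : ZMod N := ((σ : ℤ) : ZMod N) with hs
    rw [corr_split N u (2 * σ + 1)]
    have step : ∀ i ∈ Finset.range N,
        (chi (u ((2 * (i : ℤ) : ℤ) : ZMod (2 * N)))
            * chi (u ((2 * (i : ℤ) + (2 * σ + 1) : ℤ) : ZMod (2 * N)))
         + chi (u ((2 * (i : ℤ) + 1 : ℤ) : ZMod (2 * N)))
            * chi (u ((2 * (i : ℤ) + 1 + (2 * σ + 1) : ℤ) : ZMod (2 * N)))) =
        -((chi (a ((i : ℕ) : ZMod N)) * chi (a (((i : ℕ) : ZMod N) + (s + m)))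
           + chi (a (((i : ℕ) : ZMod N) + m))
              * chi (a ((((i : ℕ) : ZMod N) + m) + (s + m))))) := by
      intro i _
      have e1 : (2 * (i : ℤ) + (2 * σ + 1) : ℤ) = 2 * ((i : ℤ) + σ) + 1 := by ring
      have e2 : (2 * (i : ℤ) + 1 + (2 * σ + 1) : ℤ) = 2 * ((i : ℤ) + σ + 1) := by ring
      rw [e1, e2, hu, il_even, il_odd, il_odd, il_even, hbv, hbv, chi_one_sub, chi_one_sub]
      have c2 : (((i : ℤ)) : ZMod N) = ((i : ℕ) : ZMod N) := by push_cast; ring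
      have c1 : (((i : ℤ) + σ : ℤ) : ZMod N) + m = ((i : ℕ) : ZMod N) + (s + m) := by
        rw [hs]; push_cast; ring
      have c3 : (((i : ℤ) + σ + 1 : ℤ) : ZMod N) = (((i : ℕ) : ZMod N) + m) + (s + m) := by
        rw [hs]; push_cast; linear_combination -hm2
      rw [c1, c2, c3]
      ring_nf
    rw [Finset.sum_congr rfl step, Finset.sum_neg_distrib]
    rw [Finset.sum_add_distrib,
      sum_range_eq N (fun t => chi (a t) * chi (a (t + (s + m)))),
      sum_range_eq N (fun t => chi (a (t + m)) * chi (a ((t + m) + (s + m)))),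
      corr_shift N a (s + m) m, corr_eq]
    ring
  constructor
  · rintro ⟨k, rfl⟩
    have h1 : ((k + k : ℤ) : ZMod (2 * N)) = ((2 * k : ℤ) : ZMod (2 * N)) := by
      push_cast; ring
    have h2 : (k + k) / 2 = k := by omega
    rw [h1, h2, even_key]
  · rintro ⟨k, rfl⟩
    rw [odd_key k]
    congr 1
    have h2 : (2 * k + 1 + (N : ℤ)) / 2 = k + (cN + 1) := by omega
    rw [h2, hmval]
    push_cast
    ring
end

section
/- Let p ≡ 1 (mod 4) be an odd prime and l, l' the two Legendre sequences of period p (l(0)=0, l'(0)=1, and l(t)=l'(t)=(1-(t/p))/2 for t ≠ 0). Then their cross-correlation satisfies R_{l,l'}(τ) = p - 2 if τ = 0 and R_{l,l'}(τ) = -1 for all τ ≢ 0 (mod p). -/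
open Finset

lemma sum_range_zmod (p : ℕ) [NeZero p] (g : ZMod p → ℤ) :
    ∑ t ∈ Finset.range p, g (t : ZMod p) = ∑ t : ZMod p, g t := by
  refine Finset.sum_nbij' (fun i => (i : ZMod p)) (fun t => t.val) ?_ ?_ ?_ ?_ ?_ <;>
    intros <;> simp_all [ZMod.val_lt, ZMod.natCast_val, ZMod.val_cast_of_lt, Nat.mod_eq_of_lt]

lemma key_sum (p : ℕ) [Fact p.Prime] (hp2 : p ≠ 2) (τ : ZMod p) (hτ : τ ≠ 0) :
    ∑ t : ZMod p, quadraticChar (ZMod p) t * quadraticChar (ZMod p) (t + τ) = -1 := by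
  set χ := quadraticChar (ZMod p) with hχ
  have hchar : ringChar (ZMod p) ≠ 2 := by
    rw [ZMod.ringChar_zmod_n]; exact hp2
  have h1 : ∑ t : ZMod p, χ t * χ (t + τ) = ∑ t ∈ univ.erase (0 : ZMod p), χ (1 + τ * t⁻¹) := by
    rw [← Finset.add_sum_erase _ _ (mem_univ (0 : ZMod p))]
    rw [χ.map_zero, zero_mul, zero_add]
    refine Finset.sum_congr rfl fun t ht => ?_
    have ht0 : t ≠ 0 := (Finset.mem_erase.mp ht).1
    have heq : t + τ = t * (1 + τ * t⁻¹) := by field_simp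
    rw [heq, map_mul, ← mul_assoc, ← map_mul]
    have : χ (t * t) = 1 := by
      rcases quadraticChar_dichotomy (F := ZMod p) (a := t) ht0 with h | h <;>
        rw [map_mul, hχ, h] <;> norm_num
    rw [this, one_mul]
  have h2 : ∑ t ∈ univ.erase (0 : ZMod p), χ (1 + τ * t⁻¹)
      = ∑ u ∈ univ.erase (1 : ZMod p), χ u := by
    refine Finset.sum_nbij' (fun t => 1 + τ * t⁻¹) (fun u => τ * (u - 1)⁻¹) ?_ ?_ ?_ ?_ ?_
    · intro t ht
      have ht0 : t ≠ 0 := (Finset.mem_erase.mp ht).1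
      simp only [mem_erase, mem_univ, and_true]
      intro h
      have : τ * t⁻¹ = 0 := by linear_combination h
      rcases mul_eq_zero.mp this with h' | h'
      · exact hτ h'
      · exact ht0 (inv_eq_zero.mp h')
    · intro u hu
      have hu1 : u ≠ 1 := (Finset.mem_erase.mp hu).1
      simp only [mem_erase, mem_univ, and_true]
      intro h
      rcases mul_eq_zero.mp h with h' | h'
      · exact hτ h'
      · exact hu1 (by have := inv_eq_zero.mp h'; linear_combination this)
    · intro t ht
      have ht0 : t ≠ 0 := (Finset.mem_erase.mp ht).1
      show τ * ((1 + τ * t⁻¹) - 1)⁻¹ = t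
      have h : (1 : ZMod p) + τ * t⁻¹ - 1 = τ * t⁻¹ := by ring
      rw [h, mul_inv, inv_inv, ← mul_assoc, mul_inv_cancel₀ hτ, one_mul]
    · intro u hu
      have hu1 : u ≠ 1 := (Finset.mem_erase.mp hu).1
      have h : u - 1 ≠ 0 := sub_ne_zero.mpr hu1
      show (1 : ZMod p) + τ * (τ * (u - 1)⁻¹)⁻¹ = u
      rw [mul_inv, inv_inv, ← mul_assoc, mul_inv_cancel₀ hτ, one_mul]
      ring
    · intros; rfl
  rw [h1, h2]
  have hzero := quadraticChar_sum_zero (F := ZMod p) hchar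
  rw [← hχ, ← Finset.add_sum_erase _ χ (mem_univ (1 : ZMod p)), χ.map_one] at hzero
  linarith

theorem stmt_19 (p : ℕ) [Fact p.Prime] (hp : p % 4 = 1)
    (l l' : ZMod p → ZMod 2)
    (hl0 : l 0 = 0) (hl'0 : l' 0 = 1)
    (hl : ∀ t : ZMod p, t ≠ 0 → (l t = if IsSquare t then 0 else 1))
    (hl' : ∀ t : ZMod p, t ≠ 0 → (l' t = if IsSquare t then 0 else 1)) :
    corr p l l' 0 = (p : ℤ) - 2 ∧
    (∀ τ : ZMod p, τ ≠ 0 → corr p l l' τ = -1) := by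
  have hprime : p.Prime := Fact.out
  have hp2 : p ≠ 2 := fun h => by rw [h] at hp; norm_num at hp
  have hchar : ringChar (ZMod p) ≠ 2 := by rw [ZMod.ringChar_zmod_n]; exact hp2
  set χ := quadraticChar (ZMod p) with hχ
  have hle : ∀ t : ZMod p, t ≠ 0 → (-1 : ℤ) ^ (l t).val = χ t := by
    intro t ht
    rw [hl t ht]
    by_cases hs : IsSquare t
    · rw [if_pos hs, (quadraticChar_one_iff_isSquare ht).mpr hs]; rfl
    · rw [if_neg hs, quadraticChar_neg_one_iff_not_isSquare.mpr hs]; rfl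
  have hle' : ∀ t : ZMod p, t ≠ 0 → (-1 : ℤ) ^ (l' t).val = χ t := by
    intro t ht
    rw [hl' t ht]
    by_cases hs : IsSquare t
    · rw [if_pos hs, (quadraticChar_one_iff_isSquare ht).mpr hs]; rfl
    · rw [if_neg hs, quadraticChar_neg_one_iff_not_isSquare.mpr hs]; rfl
  constructor
  · rw [corr, sum_range_zmod p (fun t => (-1 : ℤ) ^ ((l t).val + (l' (t + 0)).val))]
    rw [← Finset.add_sum_erase _ _ (mem_univ (0 : ZMod p))]
    have h0 : (-1 : ℤ) ^ ((l 0).val + (l' (0 + 0)).val) = -1 := by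
      rw [zero_add, hl0, hl'0, ZMod.val_zero, show ((1 : ZMod 2)).val = 1 from rfl]
      norm_num
    rw [h0]
    have hrest : ∀ t ∈ univ.erase (0 : ZMod p),
        (-1 : ℤ) ^ ((l t).val + (l' (t + 0)).val) = 1 := by
      intro t ht
      have ht0 : t ≠ 0 := (Finset.mem_erase.mp ht).1
      rw [add_zero, pow_add, hle t ht0, hle' t ht0]
      rcases quadraticChar_dichotomy (F := ZMod p) (a := t) ht0 with h | h <;>
        rw [← hχ] at h <;> rw [h] <;> norm_num
    rw [Finset.sum_congr rfl hrest, Finset.sum_const, nsmul_eq_mul, mul_one]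
    rw [Finset.card_erase_of_mem (mem_univ _), Finset.card_univ, ZMod.card]
    have : 1 ≤ p := hprime.one_lt.le
    push_cast [this]
    ring
  · intro τ hτ
    rw [corr, sum_range_zmod p (fun t => (-1 : ℤ) ^ ((l t).val + (l' (t + τ)).val))]
    have hτ' : -τ ≠ 0 := neg_ne_zero.mpr hτ
    have hne : (0 : ZMod p) ≠ -τ := fun h => hτ' h.symm
    -- split the main sum at 0 and -τ
    have hmem : -τ ∈ (univ : Finset (ZMod p)).erase 0 :=
      Finset.mem_erase.mpr ⟨hτ', mem_univ _⟩
    rw [← Finset.add_sum_erase _ _ (mem_univ (0 : ZMod p)),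
        ← Finset.add_sum_erase _ _ hmem]
    have h0 : (-1 : ℤ) ^ ((l 0).val + (l' (0 + τ)).val) = χ τ := by
      rw [zero_add, hl0, ZMod.val_zero, zero_add, hle' τ hτ]
    have hmτ : (-1 : ℤ) ^ ((l (-τ)).val + (l' (-τ + τ)).val) = -χ (-τ) := by
      rw [neg_add_cancel, hl'0, pow_add, hle (-τ) hτ',
        show ((1 : ZMod 2)).val = 1 from rfl, pow_one]
      ring
    have hrest : ∀ t ∈ ((univ : Finset (ZMod p)).erase 0).erase (-τ),
        (-1 : ℤ) ^ ((l t).val + (l' (t + τ)).val) = χ t * χ (t + τ) := by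
      intro t ht
      obtain ⟨ht1, ht2⟩ := Finset.mem_erase.mp ht
      have ht0 : t ≠ 0 := (Finset.mem_erase.mp ht2).1
      have htτ : t + τ ≠ 0 := fun h => ht1 (by linear_combination h)
      rw [pow_add, hle t ht0, hle' (t + τ) htτ]
    rw [h0, hmτ, Finset.sum_congr rfl hrest]
    -- the character sum over the full set
    have hkey := key_sum p hp2 τ hτ
    rw [← Finset.add_sum_erase _ _ (mem_univ (0 : ZMod p)),
        ← Finset.add_sum_erase _ _ hmem] at hkey
    rw [← hχ] at hkey
    simp only [neg_add_cancel, χ.map_zero, zero_mul, zero_add, mul_zero] at hkey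
    -- χ(-τ) = χ τ since -1 is a square mod p (p ≡ 1 mod 4)
    have hsq : IsSquare (-1 : ZMod p) := ZMod.exists_sq_eq_neg_one_iff.mpr (by omega)
    have hneg1 : χ (-1) = 1 := by
      refine (quadraticChar_one_iff_isSquare ?_).mpr hsq
      intro h
      exact one_ne_zero (neg_eq_zero.mp h)
    have hnegτ : χ (-τ) = χ τ := by
      rw [show (-τ : ZMod p) = -1 * τ by ring, map_mul, hneg1, one_mul]
    rw [hnegτ]
    linarith
end
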